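/- arXiv:2406.07950 — 2 statements merged into one kernel-verified Lean document; each statement's English description precedes it below -/
import Mathlib

section
/- Under the primal error setting with coercivity constant α_A, for each n ∈ {1, …, N} one has (eⁿ)ᵀ M eⁿ − (eⁿ⁻¹)ᵀ M eⁿ⁻¹ + Δt·(eⁿ)ᵀ A_sym eⁿ ≤ (Δt/α_A)·‖rⁿ‖₋₁². -/
open Matrix BigOperators Finset

/-- The energy norm `‖v‖_{G*} = √(vᵀ G* v)` induced by a matrix `G`. -/
noncomputable def normG {d : ℕ} (G : Matrix (Fin d) (Fin d) ℝ) (v : Fin d → ℝ) : ℝ :=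
  Real.sqrt (v ⬝ᵥ G.mulVec v)

/-- The dual norm `‖r‖₋₁ = sup_{v ≠ 0} (rᵀ v)/‖v‖_{G*}`. -/
noncomputable def dualNorm {d : ℕ} (G : Matrix (Fin d) (Fin d) ℝ) (r : Fin d → ℝ) : ℝ :=
  ⨆ v : {v : Fin d → ℝ // v ≠ 0}, (r ⬝ᵥ (v : Fin d → ℝ)) / normG G (v : Fin d → ℝ)

/-- The symmetric part `(A + Aᵀ)/2` of a matrix. -/
noncomputable def symPart {d : ℕ} (A : Matrix (Fin d) (Fin d) ℝ) : Matrix (Fin d) (Fin d) ℝ :=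
  ((1 : ℝ)/2) • (A + Aᵀ)

/-
The step equation tested with `eⁿ` expresses `(eⁿ)ᵀ M (eⁿ - eⁿ⁻¹)` through `A` and `rⁿ`; since `M`
is positive semidefinite, twice this quantity dominates the increment of `(eⁿ)ᵀ M eⁿ`. The residual
term is bounded by `‖rⁿ‖₋₁ ‖eⁿ‖_{G*}`, and Young's inequality absorbs it into the coercivity term.
-/

lemma Matrix.PosSemidef.transpose_eq_self {n : Type*} {G : Matrix n n ℝ} (hG : G.PosSemidef) :
    Gᵀ = G := by
  simpa using hG.isHermitian.eq

section QuadraticForms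

variable {n : Type*} [Fintype n]

lemma dotProduct_mulVec_comm_of_transpose_eq {G : Matrix n n ℝ} (hG : Gᵀ = G) (v w : n → ℝ) :
    v ⬝ᵥ G *ᵥ w = w ⬝ᵥ G *ᵥ v := by
  rw [dotProduct_mulVec, ← mulVec_transpose, hG, dotProduct_comm]

lemma Matrix.PosSemidef.dotProduct_mulVec_sq_le {G : Matrix n n ℝ} (hG : G.PosSemidef)
    (v w : n → ℝ) : (v ⬝ᵥ G *ᵥ w) ^ 2 ≤ (v ⬝ᵥ G *ᵥ v) * (w ⬝ᵥ G *ᵥ w) := by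
  classical
  have hB := (toBilin' G).apply_mul_apply_le_of_forall_zero_le
    (fun x => by simpa [toBilin'_apply'] using hG.dotProduct_mulVec_nonneg x) v w
  rwa [toBilin'_apply', toBilin'_apply', toBilin'_apply', toBilin'_apply',
    dotProduct_mulVec_comm_of_transpose_eq hG.transpose_eq_self w v, ← sq] at hB

lemma Matrix.PosSemidef.sub_le_two_mul_dotProduct_mulVec_sub {M : Matrix n n ℝ}
    (hM : M.PosSemidef) (e f : n → ℝ) :
    e ⬝ᵥ M *ᵥ e - f ⬝ᵥ M *ᵥ f ≤ 2 * (e ⬝ᵥ M *ᵥ (e - f)) := by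
  have hdiff : 0 ≤ (e - f) ⬝ᵥ M *ᵥ (e - f) := by simpa using hM.dotProduct_mulVec_nonneg (e - f)
  have hsymm := dotProduct_mulVec_comm_of_transpose_eq hM.transpose_eq_self e f
  simp only [mulVec_sub, dotProduct_sub, sub_dotProduct] at hdiff ⊢
  linarith

end QuadraticForms

section EnergyNorm

variable {d : ℕ} {G : Matrix (Fin d) (Fin d) ℝ}

lemma normG_neg (v : Fin d → ℝ) : normG G (-v) = normG G v := by
  simp only [normG, mulVec_neg, dotProduct_neg, neg_dotProduct, neg_neg]

lemma normG_pos (hG : G.PosDef) {v : Fin d → ℝ} (hv : v ≠ 0) : 0 < normG G v :=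
  Real.sqrt_pos.2 (by simpa using hG.dotProduct_mulVec_pos hv)

lemma dotProduct_mulVec_le_normG_mul_normG (hG : G.PosSemidef) (v w : Fin d → ℝ) :
    v ⬝ᵥ G *ᵥ w ≤ normG G v * normG G w := by
  rw [normG, normG, ← Real.sqrt_mul (by simpa using hG.dotProduct_mulVec_nonneg v)]
  exact (le_abs_self _).trans (Real.abs_le_sqrt (hG.dotProduct_mulVec_sq_le v w))

/-- Writing `r = G w`, Cauchy–Schwarz in the `G`-inner product bounds every quotient by `‖w‖_{G*}`. -/
lemma bddAbove_range_dotProduct_div_normG (hG : G.PosDef) (r : Fin d → ℝ) :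
    BddAbove (Set.range fun v : {v : Fin d → ℝ // v ≠ 0} => (r ⬝ᵥ (v : Fin d → ℝ)) / normG G v) := by
  set w := G⁻¹ *ᵥ r
  have hr : r = G *ᵥ w := by
    rw [mulVec_mulVec, mul_nonsing_inv _ ((isUnit_iff_isUnit_det G).1 hG.isUnit), one_mulVec]
  refine ⟨normG G w, ?_⟩
  rintro _ ⟨⟨v, hv⟩, rfl⟩
  rw [div_le_iff₀ (normG_pos hG hv), hr, dotProduct_comm, mul_comm]
  exact dotProduct_mulVec_le_normG_mul_normG hG.posSemidef v w

lemma dotProduct_le_dualNorm_mul_normG (hG : G.PosDef) (r v : Fin d → ℝ) :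
    r ⬝ᵥ v ≤ dualNorm G r * normG G v := by
  rcases eq_or_ne v 0 with rfl | hv
  · simp [normG]
  · have hle := le_ciSup (bddAbove_range_dotProduct_div_normG hG r) ⟨v, hv⟩
    rwa [← div_le_iff₀ (normG_pos hG hv)]

end EnergyNorm

lemma dotProduct_symPart_mulVec {d : ℕ} (A : Matrix (Fin d) (Fin d) ℝ) (v : Fin d → ℝ) :
    v ⬝ᵥ (symPart A) *ᵥ v = v ⬝ᵥ A *ᵥ v := by
  have hT : v ⬝ᵥ Aᵀ *ᵥ v = v ⬝ᵥ A *ᵥ v := by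
    rw [mulVec_transpose, dotProduct_comm, ← dotProduct_mulVec]
  rw [symPart, smul_mulVec, dotProduct_smul, add_mulVec, dotProduct_add, hT, smul_eq_mul]
  ring

lemma two_mul_mul_sub_mul_sq_le_sq_div {α : ℝ} (hα : 0 < α) (D x : ℝ) :
    2 * D * x - α * x ^ 2 ≤ D ^ 2 / α := by
  rw [le_div_iff₀ hα]
  nlinarith [sq_nonneg (D - α * x)]

theorem stmt2_general {d : ℕ}
    (G M A : Matrix (Fin d) (Fin d) ℝ) (hG : G.PosDef) (hM : M.PosSemidef)
    (Δt : ℝ) (hΔt : 0 < Δt) (N : ℕ)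
    (αA : ℝ) (hαA : 0 < αA)
    (hcoA : ∀ v : Fin d → ℝ, αA * (normG G v)^2 ≤ v ⬝ᵥ (symPart A).mulVec v)
    (e r : ℕ → Fin d → ℝ)
    (hstep : ∀ k, 1 ≤ k → k ≤ N →
      (M + Δt • A).mulVec (e k) = M.mulVec (e (k - 1)) - Δt • r k)
    (n : ℕ) (hn1 : 1 ≤ n) (hnN : n ≤ N) :
    e n ⬝ᵥ M.mulVec (e n) - e (n - 1) ⬝ᵥ M.mulVec (e (n - 1)) +
        Δt * (e n ⬝ᵥ (symPart A).mulVec (e n)) ≤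
      (Δt / αA) * (dualNorm G (r n))^2 := by
  have htest : e n ⬝ᵥ M *ᵥ (e n - e (n - 1)) =
      -(Δt * (e n ⬝ᵥ A *ᵥ e n)) - Δt * (e n ⬝ᵥ r n) := by
    have h := congrArg (e n ⬝ᵥ ·) (hstep n hn1 hnN)
    simp only [add_mulVec, smul_mulVec, dotProduct_add, dotProduct_sub, dotProduct_smul,
      smul_eq_mul] at h
    rw [mulVec_sub, dotProduct_sub]
    linarith
  have henergy := hM.sub_le_two_mul_dotProduct_mulVec_sub (e n) (e (n - 1))
  have hcoerc := hcoA (e n)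
  have hresidual : -(e n ⬝ᵥ r n) ≤ dualNorm G (r n) * normG G (e n) := by
    simpa [normG_neg, dotProduct_comm] using dotProduct_le_dualNorm_mul_normG hG (r n) (-e n)
  rw [dotProduct_symPart_mulVec] at hcoerc ⊢
  calc _ ≤ Δt * (2 * dualNorm G (r n) * normG G (e n) - αA * normG G (e n) ^ 2) := by
        linarith [mul_le_mul_of_nonneg_left hcoerc hΔt.le,
          mul_le_mul_of_nonneg_left hresidual hΔt.le]
    _ ≤ Δt * (dualNorm G (r n) ^ 2 / αA) :=
        mul_le_mul_of_nonneg_left (two_mul_mul_sub_mul_sq_le_sq_div hαA _ _) hΔt.le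
    _ = _ := by ring

theorem stmt2 {d : ℕ} (hd : 1 ≤ d)
    (G M A : Matrix (Fin d) (Fin d) ℝ) (hG : G.PosDef) (hM : M.PosSemidef)
    (Δt : ℝ) (hΔt : 0 < Δt) (N : ℕ) (hN : 1 ≤ N)
    (αA : ℝ) (hαA : 0 < αA)
    (hcoA : ∀ v : Fin d → ℝ, αA * (normG G v)^2 ≤ v ⬝ᵥ (symPart A).mulVec v)
    (e r : ℕ → Fin d → ℝ) (he0 : e 0 = 0)
    (hstep : ∀ k, 1 ≤ k → k ≤ N →
      (M + Δt • A).mulVec (e k) = M.mulVec (e (k - 1)) - Δt • r k)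
    (n : ℕ) (hn1 : 1 ≤ n) (hnN : n ≤ N) :
    e n ⬝ᵥ M.mulVec (e n) - e (n - 1) ⬝ᵥ M.mulVec (e (n - 1)) +
        Δt * (e n ⬝ᵥ (symPart A).mulVec (e n)) ≤
      (Δt / αA) * (dualNorm G (r n))^2 :=
  stmt2_general G M A hG hM Δt hΔt N αA hαA hcoA e r hstep n hn1 hnN
end

section
/- (Primal-dual output error representation.) In the goal-oriented setting, for every n ∈ {1, …, N} the output error admits the exact representation lᵀ eⁿ = Δt·∑_{k=0}^{n−1} (r^{k+1})ᵀ ε^{N−n+k} + Δt·∑_{k=0}^{n−1} (r^{k+1})ᵀ Ψ̃^{N−n+k}, where eⁿ is the primal reduction error, ε the dual reduction error, and Ψ̃ the reduced dual solution. -/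
open Matrix BigOperators Finset

/- Pairing the primal step `B eᵏ⁺¹ = M eᵏ - c rᵏ⁺¹` with the dual step `Bᵀ ψᵏ = M ψᵏ⁺¹` shows that
the quantity `(M ψᵏ)ᵀ eᵏ` drops by exactly `c (rᵏ⁺¹)ᵀ ψᵏ` per step. It vanishes at `k = 0`
because `e⁰ = 0`, and at the final dual time it equals `-lᵀ eⁿ`, so telescoping gives the
representation through the exact dual; splitting `Ψ = ε + Ψ̃` gives the stated form. -/

section PrimalDual

variable {ι R : Type*} [Fintype ι] [CommRing R] {M B : Matrix ι ι R}

theorem mulVec_dotProduct_primal_dual_step (hM : Mᵀ = M) {c : R} {e e' r ψ ψ' : ι → R}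
    (hprimal : B *ᵥ e' = M *ᵥ e - c • r) (hdual : Bᵀ *ᵥ ψ = M *ᵥ ψ') :
    M *ᵥ ψ' ⬝ᵥ e' = M *ᵥ ψ ⬝ᵥ e - c * (r ⬝ᵥ ψ) := by
  calc M *ᵥ ψ' ⬝ᵥ e' = ψ ⬝ᵥ B *ᵥ e' := by
        rw [← hdual, dotProduct_mulVec, mulVec_transpose]
    _ = ψ ⬝ᵥ M *ᵥ e - c * (ψ ⬝ᵥ r) := by
        rw [hprimal, dotProduct_sub, dotProduct_smul, smul_eq_mul]
    _ = M *ᵥ ψ ⬝ᵥ e - c * (r ⬝ᵥ ψ) := by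
        rw [dotProduct_mulVec, ← mulVec_transpose, hM, dotProduct_comm ψ r]

theorem mulVec_dotProduct_eq_neg_sum (hM : Mᵀ = M) {c : R} {e r ψ : ℕ → ι → R} {n : ℕ}
    (he0 : e 0 = 0)
    (hprimal : ∀ k < n, B *ᵥ e (k + 1) = M *ᵥ e k - c • r (k + 1))
    (hdual : ∀ k < n, Bᵀ *ᵥ ψ k = M *ᵥ ψ (k + 1)) :
    M *ᵥ ψ n ⬝ᵥ e n = -(c * ∑ k ∈ range n, r (k + 1) ⬝ᵥ ψ k) := by
  have hstep : ∀ k ∈ range n, M *ᵥ ψ (k + 1) ⬝ᵥ e (k + 1) - M *ᵥ ψ k ⬝ᵥ e k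
      = -(c * (r (k + 1) ⬝ᵥ ψ k)) := fun k hk => by
    rw [mulVec_dotProduct_primal_dual_step hM (hprimal k (mem_range.mp hk)) (hdual k (mem_range.mp hk))]
    ring
  have htel := sum_range_sub (fun k => M *ᵥ ψ k ⬝ᵥ e k) n
  rw [sum_congr rfl hstep, he0, dotProduct_zero, sub_zero] at htel
  rw [← htel, sum_neg_distrib, mul_sum]

end PrimalDual

theorem stmt13_general {d : ℕ}
    (M A : Matrix (Fin d) (Fin d) ℝ) (hM : M.PosSemidef)
    (Δt : ℝ) (N : ℕ)
    (e r : ℕ → Fin d → ℝ) (he0 : e 0 = 0)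
    (hprimal : ∀ k, 1 ≤ k → k ≤ N →
      (M + Δt • A).mulVec (e k) = M.mulVec (e (k - 1)) - Δt • r k)
    (l : Fin d → ℝ)
    (Ψ Ψt : ℕ → Fin d → ℝ)
    (hΨN : M.mulVec (Ψ N) = -l)
    (hΨ : ∀ k, k < N → (M + Δt • Aᵀ).mulVec (Ψ k) = M.mulVec (Ψ (k + 1)))
    (ε : ℕ → Fin d → ℝ)
    (hε : ∀ k, ε k = Ψ k - Ψt k)
    (n : ℕ) (hnN : n ≤ N) :
    l ⬝ᵥ e n =
      Δt * ∑ k ∈ Finset.range n, r (k + 1) ⬝ᵥ ε (N - n + k) +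
        Δt * ∑ k ∈ Finset.range n, r (k + 1) ⬝ᵥ Ψt (N - n + k) := by
  have hMsymm : Mᵀ = M := (isHermitian_iff_isSymm.mp hM.isHermitian).eq
  have hprimal' : ∀ k < n, (M + Δt • A) *ᵥ e (k + 1) = M *ᵥ e k - Δt • r (k + 1) :=
    fun k hk => by simpa using hprimal (k + 1) (by omega) (by omega)
  have hdual : ∀ k < n, (M + Δt • A)ᵀ *ᵥ Ψ (N - n + k) = M *ᵥ Ψ (N - n + (k + 1)) :=
    fun k hk => by
      rw [transpose_add, transpose_smul, hMsymm, ← add_assoc]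
      exact hΨ _ (by omega)
  have hrep := mulVec_dotProduct_eq_neg_sum hMsymm he0 hprimal' hdual
  rw [Nat.sub_add_cancel hnN, hΨN, neg_dotProduct, neg_inj] at hrep
  simp only [hε, ← mul_add, ← sum_add_distrib, ← dotProduct_add, sub_add_cancel]
  exact hrep

theorem stmt13 {d : ℕ} (hd : 1 ≤ d)
    (M A : Matrix (Fin d) (Fin d) ℝ) (hM : M.PosSemidef)
    (Δt : ℝ) (hΔt : 0 < Δt) (N : ℕ) (hN : 1 ≤ N)
    (e r : ℕ → Fin d → ℝ) (he0 : e 0 = 0)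
    (hprimal : ∀ k, 1 ≤ k → k ≤ N →
      (M + Δt • A).mulVec (e k) = M.mulVec (e (k - 1)) - Δt • r k)
    (l : Fin d → ℝ)
    (Ψ Ψt : ℕ → Fin d → ℝ)
    (hΨN : M.mulVec (Ψ N) = -l)
    (hΨ : ∀ k, k < N → (M + Δt • Aᵀ).mulVec (Ψ k) = M.mulVec (Ψ (k + 1)))
    (hΨtN : Ψt N = Ψ N)
    (ε ϱ : ℕ → Fin d → ℝ)
    (hε : ∀ k, ε k = Ψ k - Ψt k)
    (hϱ : ∀ k, k < N →
      ϱ k = (1 / Δt) • ((M + Δt • Aᵀ).mulVec (Ψt k) - M.mulVec (Ψt (k + 1))))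
    (n : ℕ) (hn1 : 1 ≤ n) (hnN : n ≤ N) :
    l ⬝ᵥ e n =
      Δt * ∑ k ∈ Finset.range n, r (k + 1) ⬝ᵥ ε (N - n + k) +
        Δt * ∑ k ∈ Finset.range n, r (k + 1) ⬝ᵥ Ψt (N - n + k) :=
  stmt13_general M A hM Δt N e r he0 hprimal l Ψ Ψt hΨN hΨ ε hε n hnN
end
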